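/- Let m be an odd positive integer and let B be a binomial random variable with m trials and success probability 2/3. Then P(B ≥ (m+1)/2) ≥ 1/2. -/

import Mathlib

open MeasureTheory ENNReal

/-- The Bernoulli probability measure on `Bool` giving mass `q` to `true`. -/
noncomputable def bernoulliM (q : ℝ) : Measure Bool :=
  ENNReal.ofReal q • Measure.dirac true + ENNReal.ofReal (1 - q) • Measure.dirac false

/-- The binomial distribution with `m` trials and success probability `q`: the distribution
of the number of successes in `m` independent Bernoulli trials each succeeding with
probability `q`. -/
noncomputable def binomialM (m : ℕ) (q : ℝ) : Measure ℕ :=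
  Measure.map (fun v : Fin m → Bool => (Finset.univ.filter fun k => v k = true).card)
    (Measure.pi fun _ : Fin m => bernoulliM q)

/-! Flipping every trial maps an outcome with fewer than `⌈m/2⌉` successes injectively to one
with at least `⌈m/2⌉` successes, and when `1 - q ≤ q` it does not decrease the probability of
the outcome. Hence `P(B < ⌈m/2⌉) ≤ P(B ≥ ⌈m/2⌉)`, and the two probabilities add up to `1`. -/

open Set Function

theorem pow_mul_pow_le_pow_mul_pow {M : Type*} [CommMonoid M] [PartialOrder M]
    [IsOrderedMonoid M] {a b : M} (hba : b ≤ a) {j k : ℕ} (hjk : j ≤ k) :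
    a ^ j * b ^ k ≤ a ^ k * b ^ j := by
  obtain ⟨d, rfl⟩ := Nat.exists_eq_add_of_le hjk
  calc a ^ j * b ^ (j + d) = a ^ j * b ^ j * b ^ d := by rw [pow_add, mul_assoc]
    _ ≤ a ^ j * b ^ j * a ^ d := mul_le_mul_right (pow_le_pow_left' hba d) _
    _ = a ^ (j + d) * b ^ j := by rw [pow_add]; ac_rfl

theorem measure_le_measure_image_of_forall_le {α β : Type*} [MeasurableSpace α]
    [MeasurableSpace β] [MeasurableSingletonClass α] [MeasurableSingletonClass β]
    {μ : Measure α} {ν : Measure β} {f : α → β} (hf : Injective f) (s : Finset α)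
    (h : ∀ x ∈ s, μ {x} ≤ ν {f x}) : μ s ≤ ν (f '' s) := by
  classical
  rw [← sum_measure_singleton, ← Finset.coe_image, ← sum_measure_singleton,
    Finset.sum_image hf.injOn]
  exact Finset.sum_le_sum h

instance (q : ℝ) : IsFiniteMeasure (bernoulliM q) :=
  ⟨by simp [bernoulliM]⟩

theorem bernoulliM_singleton (q : ℝ) (b : Bool) :
    bernoulliM q {b} = if b then ENNReal.ofReal q else ENNReal.ofReal (1 - q) := by
  cases b <;> simp [bernoulliM]

theorem bernoulliM_univ {q : ℝ} (hq₀ : 0 ≤ q) (hq₁ : q ≤ 1) : bernoulliM q univ = 1 := by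
  simp [bernoulliM, ← ENNReal.ofReal_add hq₀ (sub_nonneg.2 hq₁)]

def successCount {m : ℕ} (v : Fin m → Bool) : ℕ :=
  (Finset.univ.filter fun k => v k = true).card

theorem successCount_not_add {m : ℕ} (v : Fin m → Bool) :
    successCount (fun i => !v i) + successCount v = m := by
  rw [add_comm]
  simpa [successCount] using
    Finset.card_filter_add_card_filter_not (s := Finset.univ) fun i : Fin m => v i = true

theorem pi_bernoulliM_singleton {m : ℕ} (q : ℝ) (v : Fin m → Bool) :
    Measure.pi (fun _ : Fin m => bernoulliM q) {v}
      = ENNReal.ofReal q ^ successCount v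
          * ENNReal.ofReal (1 - q) ^ successCount (fun i => !v i) := by
  simp only [Measure.pi_singleton, bernoulliM_singleton, Finset.prod_ite, Finset.prod_const]
  simp [successCount]

theorem pi_bernoulliM_singleton_le_not {m : ℕ} {q : ℝ} (hq : 1 / 2 ≤ q) {v : Fin m → Bool}
    (hv : successCount v ≤ successCount (fun i => !v i)) :
    Measure.pi (fun _ : Fin m => bernoulliM q) {v}
      ≤ Measure.pi (fun _ : Fin m => bernoulliM q) {fun i => !v i} := by
  rw [pi_bernoulliM_singleton, pi_bernoulliM_singleton]
  simp only [Bool.not_not]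
  exact pow_mul_pow_le_pow_mul_pow (ENNReal.ofReal_le_ofReal (by linarith)) hv

theorem binomialM_apply (m : ℕ) (q : ℝ) (s : Set ℕ) :
    binomialM m q s = Measure.pi (fun _ : Fin m => bernoulliM q) (successCount ⁻¹' s) :=
  Measure.map_apply (measurable_of_countable _) s.to_countable.measurableSet

theorem binomialM_univ (m : ℕ) {q : ℝ} (hq₀ : 0 ≤ q) (hq₁ : q ≤ 1) :
    binomialM m q univ = 1 := by
  rw [binomialM_apply, preimage_univ, Measure.pi_univ]
  simp only [bernoulliM_univ hq₀ hq₁, Finset.prod_const_one]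

theorem binomialM_Iio_le_Ici (m : ℕ) {q : ℝ} (hq : 1 / 2 ≤ q) :
    binomialM m q (Iio ((m + 1) / 2)) ≤ binomialM m q (Ici ((m + 1) / 2)) := by
  classical
  let s : Finset (Fin m → Bool) := Finset.univ.filter fun v => successCount v < (m + 1) / 2
  have hs : (s : Set (Fin m → Bool)) = successCount ⁻¹' Iio ((m + 1) / 2) := by ext; simp [s]
  have hflip :
      (fun v i => !v i) '' (s : Set (Fin m → Bool)) ⊆ successCount ⁻¹' Ici ((m + 1) / 2) := by
    rintro _ ⟨v, hv, rfl⟩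
    have := successCount_not_add v
    simp [s] at hv ⊢
    omega
  rw [binomialM_apply, binomialM_apply, ← hs]
  calc _ ≤ _ := measure_le_measure_image_of_forall_le Bool.not_injective.comp_left s ?_
    _ ≤ _ := measure_mono hflip
  intro v hv
  have := successCount_not_add v
  simp [s] at hv
  exact pi_bernoulliM_singleton_le_not hq (by omega)

theorem half_le_binomialM_Ici (m : ℕ) {q : ℝ} (hq : 1 / 2 ≤ q) (hq₁ : q ≤ 1) :
    1 / 2 ≤ binomialM m q (Ici ((m + 1) / 2)) := by
  have hsum := measure_add_measure_compl (μ := binomialM m q)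
    (measurableSet_Ici (a := (m + 1) / 2))
  rw [compl_Ici, binomialM_univ m (by linarith) hq₁] at hsum
  rw [ENNReal.div_le_iff_le_mul (Or.inl two_ne_zero) (Or.inl ENNReal.ofNat_ne_top), ← hsum,
    mul_two]
  exact add_le_add_right (binomialM_Iio_le_Ici m hq) _

theorem binomial_two_thirds_odd_general (m : ℕ) :
    ENNReal.ofReal (1 / 2) ≤ binomialM m (2 / 3) {r : ℕ | (m + 1) / 2 ≤ r} := by
  rw [ENNReal.ofReal_div_of_pos two_pos, ENNReal.ofReal_one, ENNReal.ofReal_ofNat]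
  exact half_le_binomialM_Ici m (by norm_num) (by norm_num)

/-- Let `m` be an odd positive integer and let `B` be a binomial random variable with `m`
trials and success probability `2/3`. Then `P(B ≥ (m+1)/2) ≥ 1/2`. -/
theorem binomial_two_thirds_odd (m : ℕ) (hm : 0 < m) (ho : Odd m) :
    ENNReal.ofReal (1 / 2) ≤ binomialM m (2 / 3) {r : ℕ | (m + 1) / 2 ≤ r} :=
  binomial_two_thirds_odd_general m
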